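/- (Rigal–Gaches theorem, one direction) Let A be an n×n matrix, b, y vectors with ‖A‖‖y‖ + ‖b‖ > 0, and set η := ‖Ay − b‖ / (‖A‖‖y‖ + ‖b‖). Then there exist a matrix ΔA and a vector Δb with ‖ΔA‖ ≤ η‖A‖, ‖Δb‖ ≤ η‖b‖, and (A + ΔA)y = b + Δb. -/

import Mathlib

/-!
Write `r = A y - b` and `d = ‖A‖ ‖y‖ + ‖b‖`. Split the residual between the two data in proportion
to `‖A‖ ‖y‖` and `‖b‖`: take `Δb = (‖b‖ / d) r`, and for `ΔA` a rank-one operator sending `y` to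
`-(‖A‖ ‖y‖ / d) r`, built from a Hahn–Banach norming functional of `y`, so that
`‖ΔA‖ ≤ (‖A‖ / d) ‖r‖`. Then `(A + ΔA) y = b + r - (‖A‖ ‖y‖ / d) r = b + Δb`.
-/

open scoped Matrix.Norms.L2Operator
open Matrix

/-- Multiplication of a matrix by a Euclidean vector, as a map on `EuclideanSpace`. -/
noncomputable def mv {n : ℕ} (A : Matrix (Fin n) (Fin n) ℝ)
    (v : EuclideanSpace ℝ (Fin n)) : EuclideanSpace ℝ (Fin n) :=
  (EuclideanSpace.equiv (Fin n) ℝ).symm (A *ᵥ v)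

section BackwardError

variable {𝕜 E F : Type*} [RCLike 𝕜] [SeminormedAddCommGroup E] [NormedSpace 𝕜 E]
  [SeminormedAddCommGroup F] [NormedSpace 𝕜 F]

theorem ContinuousLinearMap.exists_norm_le_apply_eq_norm_smul (y : E) (r : F) :
    ∃ T : E →L[𝕜] F, ‖T‖ ≤ ‖r‖ ∧ T y = (‖y‖ : 𝕜) • r := by
  obtain ⟨g, hg_norm, hg_y⟩ := exists_dual_vector'' 𝕜 y
  refine ⟨g.smulRight r, ?_, by rw [smulRight_apply, hg_y]⟩
  calc ‖g.smulRight r‖ = ‖g‖ * ‖r‖ := norm_smulRight_apply g r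
    _ ≤ ‖r‖ := mul_le_of_le_one_left (norm_nonneg r) hg_norm

theorem ContinuousLinearMap.exists_backward_perturbation (A : E →L[𝕜] F) (b : F) (y : E)
    (hpos : 0 < ‖A‖ * ‖y‖ + ‖b‖) :
    ∃ (ΔA : E →L[𝕜] F) (Δb : F),
      ‖ΔA‖ ≤ ‖A y - b‖ / (‖A‖ * ‖y‖ + ‖b‖) * ‖A‖ ∧
      ‖Δb‖ ≤ ‖A y - b‖ / (‖A‖ * ‖y‖ + ‖b‖) * ‖b‖ ∧
      (A + ΔA) y = b + Δb := by
  set den := ‖A‖ * ‖y‖ + ‖b‖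
  set r := A y - b
  obtain ⟨T, hT_norm, hT_y⟩ := exists_norm_le_apply_eq_norm_smul (𝕜 := 𝕜) y r
  refine ⟨-((‖A‖ / den : ℝ) : 𝕜) • T, ((‖b‖ / den : ℝ) : 𝕜) • r, ?_, ?_, ?_⟩
  · rw [norm_smul, norm_neg, RCLike.norm_ofReal, abs_of_nonneg (by positivity)]
    calc ‖A‖ / den * ‖T‖ ≤ ‖A‖ / den * ‖r‖ := by gcongr
      _ = ‖r‖ / den * ‖A‖ := by ring
  · rw [norm_smul, RCLike.norm_ofReal, abs_of_nonneg (by positivity)]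
    exact le_of_eq (by ring)
  · have hcoeff : ((‖b‖ / den : ℝ) : 𝕜) = 1 - ((‖A‖ / den : ℝ) : 𝕜) * (‖y‖ : 𝕜) := by
      rw [← RCLike.ofReal_mul, ← RCLike.ofReal_one, ← RCLike.ofReal_sub]
      congr 1
      field_simp
      ring
    have hAy : A y = b + r := (add_sub_cancel b (A y)).symm
    rw [_root_.add_apply, neg_smul, _root_.neg_apply, _root_.smul_apply, hT_y, hcoeff, hAy,
      sub_smul, one_smul, mul_smul]
    abel

end BackwardError

theorem mv_eq_toEuclideanCLM {n : ℕ} (A : Matrix (Fin n) (Fin n) ℝ)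
    (v : EuclideanSpace ℝ (Fin n)) :
    mv A v = toEuclideanCLM (𝕜 := ℝ) A v :=
  rfl

theorem stmt6 {n : ℕ} (A : Matrix (Fin n) (Fin n) ℝ)
    (b y : EuclideanSpace ℝ (Fin n)) (hpos : 0 < ‖A‖ * ‖y‖ + ‖b‖) :
    ∃ (ΔA : Matrix (Fin n) (Fin n) ℝ) (Δb : EuclideanSpace ℝ (Fin n)),
      ‖ΔA‖ ≤ (‖mv A y - b‖ / (‖A‖ * ‖y‖ + ‖b‖)) * ‖A‖ ∧
      ‖Δb‖ ≤ (‖mv A y - b‖ / (‖A‖ * ‖y‖ + ‖b‖)) * ‖b‖ ∧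
      mv (A + ΔA) y = b + Δb := by
  obtain ⟨ΔT, Δb, hΔT, hΔb, hsol⟩ :=
    (toEuclideanCLM (𝕜 := ℝ) A).exists_backward_perturbation b y hpos
  refine ⟨(toEuclideanCLM (𝕜 := ℝ)).symm ΔT, Δb, ?_, hΔb, ?_⟩
  · rwa [cstar_norm_def, StarAlgEquiv.apply_symm_apply]
  · rwa [mv_eq_toEuclideanCLM, map_add, StarAlgEquiv.apply_symm_apply]
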